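/- For every integer d ≥ 5, the second derived subgroup of the Fabrykowski–Gupta group equals its second level stabilizer, Γ_d'' = Stab_{Γ_d}(2); consequently the index [Γ_d' : Γ_d''] equals d^{d−1}. -/

import Mathlib

namespace FG

variable (d : ℕ) [NeZero d]

/-- The rooted-tree automorphism `a` of the `d`-regular rooted tree (vertex set: the free
monoid `{0,…,d-1}^*`), acting by `(x w)^a = ((x+1) mod d) w`. -/
def aFun : List (Fin d) → List (Fin d)
  | [] => []
  | x :: w => (x + 1) :: w

def aInv : List (Fin d) → List (Fin d)
  | [] => []
  | x :: w => (x - 1) :: w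

lemma aInv_aFun : ∀ w, aInv d (aFun d w) = w := by
  intro w; cases w <;> simp [aFun, aInv]

lemma aFun_aInv : ∀ w, aFun d (aInv d w) = w := by
  intro w; cases w <;> simp [aFun, aInv]

def aPerm : Equiv.Perm (List (Fin d)) :=
  ⟨aFun d, aInv d, aInv_aFun d, aFun_aInv d⟩

/-- The rooted-tree automorphism `r`:
`(0 w)^r = 0 w^a`, `(x w)^r = x w` for `1 ≤ x ≤ d-2`, `((d-1) w)^r = (d-1) w^r`. -/
def rFun : List (Fin d) → List (Fin d)
  | [] => []
  | x :: w => if x = 0 then x :: aFun d w else if x = -1 then x :: rFun w else x :: w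

def rInv : List (Fin d) → List (Fin d)
  | [] => []
  | x :: w => if x = 0 then x :: aInv d w else if x = -1 then x :: rInv w else x :: w

lemma rInv_rFun : ∀ w, rInv d (rFun d w) = w := by
  intro w
  induction w with
  | nil => simp [rFun, rInv]
  | cons x w ih =>
    by_cases h0 : x = 0
    · simp [rFun, rInv, h0, aInv_aFun]
    · by_cases h1 : x = -1
      · subst h1
        have hd : ¬ d = 1 := by simpa using h0
        simp [rFun, rInv, hd, ih]
      · simp [rFun, rInv, h0, h1]

lemma rFun_rInv : ∀ w, rFun d (rInv d w) = w := by
  intro w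
  induction w with
  | nil => simp [rFun, rInv]
  | cons x w ih =>
    by_cases h0 : x = 0
    · simp [rFun, rInv, h0, aFun_aInv]
    · by_cases h1 : x = -1
      · subst h1
        have hd : ¬ d = 1 := by simpa using h0
        simp [rFun, rInv, hd, ih]
      · simp [rFun, rInv, h0, h1]

def rPerm : Equiv.Perm (List (Fin d)) :=
  ⟨rFun d, rInv d, rInv_rFun d, rFun_rInv d⟩

/-- The Fabrykowski–Gupta group `Γ_d`, as the subgroup of the permutation group of the
free monoid `{0,…,d-1}^*` generated by the tree automorphisms `a` and `r`. -/
def Gamma : Subgroup (Equiv.Perm (List (Fin d))) :=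
  Subgroup.closure {aPerm d, rPerm d}

/-- The generator `a` as an element of `Γ_d`. -/
def aG : ↥(Gamma d) :=
  ⟨aPerm d, Subgroup.subset_closure (Set.mem_insert _ _)⟩

/-- The generator `r` as an element of `Γ_d`. -/
def rG : ↥(Gamma d) :=
  ⟨rPerm d, Subgroup.subset_closure (Set.mem_insert_iff.mpr (Or.inr rfl))⟩

/-- The `n`-th level stabilizer `Stab_{Γ_d}(n)`: all elements of `Γ_d` fixing every word
of length `n`. -/
def Stab (n : ℕ) : Subgroup ↥(Gamma d) where
  carrier := { g | ∀ w : List (Fin d), w.length = n → (g : Equiv.Perm (List (Fin d))) w = w }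
  one_mem' := by intro w _; rfl
  mul_mem' := by
    intro g h hg hh w hw
    have : ((g * h : ↥(Gamma d)) : Equiv.Perm (List (Fin d))) w
        = (g : Equiv.Perm (List (Fin d))) ((h : Equiv.Perm (List (Fin d))) w) := rfl
    rw [this, hh w hw, hg w hw]
  inv_mem' := by
    intro g hg w hw
    have h1 := hg w hw
    calc ((g⁻¹ : ↥(Gamma d)) : Equiv.Perm (List (Fin d))) w
        = (g : Equiv.Perm (List (Fin d)))⁻¹ ((g : Equiv.Perm (List (Fin d))) w) := by
          rw [h1]; rfl
      _ = w := Equiv.symm_apply_apply _ _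

/-- The conjugate `g_i = r^{a^i} = a^{-i} r a^i` in `Γ_d`. -/
def gG (i : ℕ) : ↥(Gamma d) := (aG d ^ i)⁻¹ * rG d * aG d ^ i

end FG


/-!
Every `g ∈ Γ_d` acts by `g (i :: w) = (i + rot g) :: (sect g i) w` with `sect g i ∈ Γ_d`, i.e.
`g = (sect g 0, …, sect g (d-1)) a^(rot g)`; on `Stab(1)` the map `g ↦ sect g` is an injective
homomorphism to `Γ_d^d`.

`Stab(1)` is the normal subgroup generated by the conjugates `g_n = r^(a^n)`, which have
order `d`, and the level map `g ↦ (rot (sect g i))_i` sends `g_n` to a basis vector of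
`(ℤ/d)^d`. Hence `Stab(1)^ab ≅ (ℤ/d)^d` and `Stab(2) = [Stab(1), Stab(1)]`.

For `d ≥ 5` the element `[g_3⁻¹ g_2, g_0⁻¹ g_1] ∈ Γ''` has `[a, r]` as its only nontrivial
section. Conjugating it shows that the normal subgroup of those `x` such that every vector
`(1, …, x, …, 1)` is the section vector of an element of `Γ''` contains `[a, r]`, hence `Γ'`.
The sections of a commutator of two elements of `Stab(1)` lie in `Γ'`, so
`[Stab(1), Stab(1)] ≤ Γ''`.

Finally the level map embeds `Γ'/Γ''` into `(ℤ/d)^d`. Its image lies in the sum-zero vectors,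
since the total rotation `∑ i, rot (sect g i)` is a homomorphism on all of `Γ_d`. The images of
`g_m⁻¹ g_n ∈ Γ'` generate that subgroup, which has order `d^(d-1)`.
-/

open scoped commutatorElement Fin.NatCast Fin.CommRing

lemma commutator_le_of_closure_pair_eq_top {G : Type*} [Group G] {x y : G}
    (hxy : Subgroup.closure {x, y} = ⊤) {N : Subgroup G} [N.Normal] (h : ⁅x, y⁆ ∈ N) :
    commutator G ≤ N := by
  set π := QuotientGroup.mk' N
  have hπ : π x * π y = π y * π x := by
    rw [← commutatorElement_eq_one_iff_mul_comm, ← map_commutatorElement,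
      QuotientGroup.mk'_apply, QuotientGroup.eq_one_iff]
    exact h
  have hcomm : ∀ u ∈ ({π x, π y} : Set (G ⧸ N)), ∀ v ∈ ({π x, π y} : Set (G ⧸ N)),
      u * v = v * u := by
    rintro u (rfl | rfl) v (rfl | rfl) <;> first | rfl | exact hπ | exact hπ.symm
  have htop : Subgroup.closure ({π x, π y} : Set (G ⧸ N)) = ⊤ := by
    rw [← Set.image_pair, ← MonoidHom.map_closure, hxy, ← MonoidHom.range_eq_map,
      QuotientGroup.range_mk']
  have hcent (z : G ⧸ N) : z ∈ Set.centralizer (Set.centralizer {π x, π y}) :=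
    Subgroup.closure_le_centralizer_centralizer _ (htop ▸ Subgroup.mem_top z)
  rw [commutator_def, Subgroup.commutator_le]
  intro g _ g' _
  rw [← QuotientGroup.eq_one_iff, ← QuotientGroup.mk'_apply, map_commutatorElement,
    commutatorElement_eq_one_iff_mul_comm]
  exact Set.centralizer_centralizer_comm_of_comm hcomm _ (hcent _) _ (hcent _)

def piProdHom {ι M : Type*} [Fintype ι] [CommMonoid M] : (ι → M) →* M :=
  ∏ i, Pi.evalMonoidHom (fun _ => M) i

lemma piProdHom_apply {ι M : Type*} [Fintype ι] [CommMonoid M] (v : ι → M) :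
    piProdHom v = ∏ i, v i := by
  simp [piProdHom]

lemma card_ker_piProdHom_mul {ι M : Type*} [Fintype ι] [DecidableEq ι] [Nonempty ι]
    [CommGroup M] [Finite M] :
    Nat.card (piProdHom : (ι → M) →* M).ker * Nat.card M = Nat.card M ^ Fintype.card ι := by
  have hsurj : (piProdHom : (ι → M) →* M).range = ⊤ := by
    refine MonoidHom.range_eq_top.mpr fun x => ⟨Pi.mulSingle (Classical.arbitrary ι) x, ?_⟩
    simp [piProdHom_apply]
  calc Nat.card (piProdHom : (ι → M) →* M).ker * Nat.card M
      = Nat.card (piProdHom : (ι → M) →* M).ker * (piProdHom : (ι → M) →* M).ker.index := by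
        rw [Subgroup.index_ker, hsurj, Subgroup.card_top]
    _ = Nat.card M ^ Fintype.card ι := by
        rw [Subgroup.card_mul_index, Nat.card_pi, Finset.prod_const, Finset.card_univ]

lemma ker_piProdHom_le {ι M : Type*} [Fintype ι] [DecidableEq ι] [CommGroup M]
    {R : Subgroup (ι → M)} (i₀ : ι) (hR : ∀ i x, Pi.mulSingle i x / Pi.mulSingle i₀ x ∈ R) :
    (piProdHom : (ι → M) →* M).ker ≤ R := by
  intro v hv
  rw [MonoidHom.mem_ker, piProdHom_apply] at hv
  have hsingle : ∏ i, (Pi.mulSingle i₀ (v i) : ι → M) = 1 := by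
    rw [← Pi.mulSingle_one i₀, ← hv]
    exact (map_prod (MonoidHom.mulSingle (fun _ : ι => M) i₀) v _).symm
  have hdecomp : v = ∏ i, (Pi.mulSingle i (v i) / Pi.mulSingle i₀ (v i)) := by
    rw [Finset.prod_div_distrib, Finset.univ_prod_mulSingle, hsingle, div_one]
  exact hdecomp ▸ Subgroup.prod_mem _ fun i _ => hR i (v i)

def finPowHom {d : ℕ} [NeZero d] {ι Q : Type*} [Fintype ι] [CommGroup Q] (z : ι → Q)
    (hz : ∀ i, z i ^ d = 1) : (ι → Multiplicative (Fin d)) →* Q where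
  toFun v := ∏ i, z i ^ (v i).toAdd.val
  map_one' := by simp
  map_mul' v w := by
    rw [← Finset.prod_mul_distrib]
    refine Finset.prod_congr rfl fun i _ => ?_
    rw [← pow_add, Pi.mul_apply, toAdd_mul, Fin.val_add, ← pow_eq_pow_mod _ (hz i)]

lemma finPowHom_mulSingle {d : ℕ} [NeZero d] {ι Q : Type*} [Fintype ι] [DecidableEq ι]
    [CommGroup Q] (hd : 1 < d) (z : ι → Q) (hz : ∀ i, z i ^ d = 1) (c : ι) :
    finPowHom z hz (Pi.mulSingle c (.ofAdd 1)) = z c := by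
  rw [finPowHom, MonoidHom.coe_mk, OneHom.coe_mk, Finset.prod_eq_single c]
  · rw [Pi.mulSingle_eq_same, toAdd_ofAdd, Fin.val_one', Nat.mod_eq_of_lt hd, pow_one]
  · intro i _ hi
    rw [Pi.mulSingle_eq_of_ne hi, toAdd_one, Fin.val_zero, pow_zero]
  · simp

lemma Fin.natCast_ne_zero_of_lt {d k : ℕ} [NeZero d] (h0 : 0 < k) (hk : k < d) :
    (k : Fin d) ≠ 0 := by
  rw [Ne, Fin.natCast_eq_zero]
  exact Nat.not_dvd_of_pos_of_lt h0 hk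

namespace FG

variable {d : ℕ} [NeZero d]

local notation "Γ" => Gamma d
local notation "𝕋" => Equiv.Perm (List (Fin d))

/-! ### Wreath recursion -/

lemma closure_aG_rG : Subgroup.closure {aG d, rG d} = (⊤ : Subgroup Γ) := by
  have h : ((↑) : Γ → 𝕋) ⁻¹' {aPerm d, rPerm d} = {aG d, rG d} := by
    ext g
    simp [aG, rG, Subtype.ext_iff]
  rw [← h]
  exact Subgroup.closure_closure_coe_preimage

def rSect (k : Fin d) : Γ := if k = 0 then aG d else if k = -1 then rG d else 1

lemma rG_apply_cons (i : Fin d) (w : List (Fin d)) :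
    (rG d : 𝕋) (i :: w) = (i + 0) :: (rSect i : 𝕋) w := by
  show rFun d (i :: w) = _
  unfold rFun rSect
  split_ifs <;> rw [add_zero] <;> rfl

lemma exists_decomp (g : Γ) : ∃ (c : Fin d) (s : Fin d → Γ),
    ∀ (i : Fin d) (w : List (Fin d)), (g : 𝕋) (i :: w) = (i + c) :: (s i : 𝕋) w := by
  have hg : g ∈ Subgroup.closure {aG d, rG d} := by
    rw [closure_aG_rG]
    exact Subgroup.mem_top g
  induction hg using Subgroup.closure_induction with
  | mem x hx =>
    rcases hx with rfl | rfl
    · exact ⟨1, 1, fun i w => rfl⟩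
    · exact ⟨0, rSect, rG_apply_cons⟩
  | one => exact ⟨0, 1, fun i w => by simp⟩
  | mul x y _ _ hx hy =>
    obtain ⟨c, s, hcs⟩ := hx
    obtain ⟨c', s', hcs'⟩ := hy
    exact ⟨c' + c, fun i => s (i + c') * s' i, fun i w => by simp [hcs', hcs, add_assoc]⟩
  | inv x _ hx =>
    obtain ⟨c, s, hcs⟩ := hx
    refine ⟨-c, fun i => (s (i + -c))⁻¹, fun i w => (x : 𝕋).injective ?_⟩
    simp [hcs]

noncomputable def rot (g : Γ) : Fin d := (exists_decomp g).choose

noncomputable def sect (g : Γ) : Fin d → Γ := (exists_decomp g).choose_spec.choose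

lemma apply_cons (g : Γ) (i : Fin d) (w : List (Fin d)) :
    (g : 𝕋) (i :: w) = (i + rot g) :: (sect g i : 𝕋) w :=
  (exists_decomp g).choose_spec.choose_spec i w

lemma apply_nil (g : Γ) : (g : 𝕋) [] = [] := by
  cases h : (g : 𝕋) [] with
  | nil => rfl
  | cons i w =>
    have := apply_cons g⁻¹ i w
    rw [← h, Subgroup.coe_inv, Equiv.Perm.inv_def, Equiv.symm_apply_apply] at this
    simp at this

lemma rot_sect_unique {g : Γ} {c : Fin d} {s : Fin d → Γ}
    (h : ∀ (i : Fin d) (w : List (Fin d)), (g : 𝕋) (i :: w) = (i + c) :: (s i : 𝕋) w) :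
    rot g = c ∧ sect g = s := by
  have key := fun i w => (apply_cons g i w).symm.trans (h i w)
  simp only [List.cons.injEq, add_right_inj] at key
  exact ⟨(key 0 []).1, funext fun i => Subtype.ext (Equiv.ext fun w => (key i w).2)⟩

lemma ext_rot_sect {g h : Γ} (hr : rot g = rot h) (hs : sect g = sect h) : g = h := by
  refine Subtype.ext (Equiv.ext fun w => ?_)
  cases w with
  | nil => rw [apply_nil, apply_nil]
  | cons i w => rw [apply_cons, apply_cons, hr, hs]

lemma apply_cons_mul (g h : Γ) (i : Fin d) (w : List (Fin d)) :
    ((g * h : Γ) : 𝕋) (i :: w) =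
      (i + (rot h + rot g)) :: ((sect g (i + rot h) * sect h i : Γ) : 𝕋) w := by
  simp [apply_cons, add_assoc]

lemma rot_mul (g h : Γ) : rot (g * h) = rot h + rot g :=
  (rot_sect_unique (apply_cons_mul g h)).1

lemma sect_mul (g h : Γ) : sect (g * h) = fun i => sect g (i + rot h) * sect h i :=
  (rot_sect_unique (apply_cons_mul g h)).2

lemma apply_cons_inv (g : Γ) (i : Fin d) (w : List (Fin d)) :
    ((g⁻¹ : Γ) : 𝕋) (i :: w) = (i + -rot g) :: (((sect g (i + -rot g))⁻¹ : Γ) : 𝕋) w :=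
  (g : 𝕋).injective (by simp [apply_cons])

lemma sect_inv (g : Γ) : sect g⁻¹ = fun i => (sect g (i + -rot g))⁻¹ :=
  (rot_sect_unique (apply_cons_inv g)).2

lemma rot_one : rot (1 : Γ) = 0 := (rot_sect_unique (s := 1) fun _ _ => by simp).1

lemma sect_one : sect (1 : Γ) = 1 := (rot_sect_unique (c := 0) fun _ _ => by simp).2

lemma rot_aG : rot (aG d) = 1 := (rot_sect_unique (s := 1) fun _ _ => rfl).1

lemma sect_aG : sect (aG d) = 1 := (rot_sect_unique (c := 1) fun _ _ => rfl).2

lemma rot_rG : rot (rG d) = 0 := (rot_sect_unique rG_apply_cons).1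

lemma sect_rG : sect (rG d) = rSect := (rot_sect_unique rG_apply_cons).2

lemma rot_rSect (k : Fin d) : rot (rSect k) = if k = 0 then 1 else 0 := by
  unfold rSect
  split_ifs <;> simp [rot_aG, rot_rG, rot_one]

variable (d) in
noncomputable def rotHom : Γ →* Multiplicative (Fin d) where
  toFun g := .ofAdd (rot g)
  map_one' := by rw [rot_one]; rfl
  map_mul' g h := by rw [rot_mul, add_comm]; rfl

lemma rotHom_apply (g : Γ) : rotHom d g = .ofAdd (rot g) := rfl

lemma rot_aG_pow (n : ℕ) : rot (aG d ^ n) = n := by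
  induction n with
  | zero => rw [pow_zero, rot_one, Nat.cast_zero]
  | succ n ih => rw [pow_succ, rot_mul, rot_aG, ih, Nat.cast_succ, add_comm]

lemma sect_aG_pow (n : ℕ) : sect (aG d ^ n) = 1 := by
  induction n with
  | zero => exact sect_one
  | succ n ih => simp [pow_succ, sect_mul, ih, sect_aG]; rfl

lemma aG_pow_d : aG d ^ d = 1 :=
  ext_rot_sect (by rw [rot_aG_pow, Fin.natCast_self, rot_one]) (by rw [sect_aG_pow, sect_one])

lemma sect_conj_aG_pow (n : ℕ) (g : Γ) :
    sect ((aG d ^ n)⁻¹ * g * aG d ^ n) = fun i => sect g (i + n) := by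
  funext i
  simp [sect_mul, sect_inv, sect_aG_pow, rot_aG_pow]

lemma rot_gG (n : ℕ) : rot (gG d n) = 0 := by
  have h : rotHom d (gG d n) = 1 := by
    rw [gG, map_mul, map_mul, map_inv, rotHom_apply (rG d), rot_rG, ofAdd_zero, mul_one,
      inv_mul_cancel]
  rwa [rotHom_apply, ofAdd_eq_one] at h

lemma sect_gG (n : ℕ) : sect (gG d n) = fun i : Fin d => rSect (i + (n : Fin d)) := by
  rw [gG, sect_conj_aG_pow, sect_rG]

/-! ### The first two level stabilizers -/

lemma mem_stab_one_iff {g : Γ} : g ∈ Stab d 1 ↔ rot g = 0 := by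
  show (∀ w : List (Fin d), w.length = 1 → (g : 𝕋) w = w) ↔ _
  simp [List.length_eq_one_iff, apply_cons, apply_nil]

lemma mem_stab_two_iff {g : Γ} : g ∈ Stab d 2 ↔ rot g = 0 ∧ ∀ i, rot (sect g i) = 0 := by
  constructor
  · intro h
    have key := fun i x => h [i, x] rfl
    simp only [apply_cons, apply_nil, List.cons.injEq, add_eq_left, and_true] at key
    exact ⟨(key 0 0).1, fun i => (key i 0).2⟩
  · rintro ⟨h1, h2⟩ w hw
    obtain ⟨i, x, rfl⟩ := List.length_eq_two.mp hw
    simp [apply_cons, apply_nil, h1, h2]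

lemma stab_one_eq_ker : Stab d 1 = (rotHom d).ker := by
  ext g
  rw [mem_stab_one_iff, MonoidHom.mem_ker, rotHom_apply, ofAdd_eq_one]

lemma stab_two_le_stab_one : Stab d 2 ≤ Stab d 1 :=
  fun _ hg => mem_stab_one_iff.mpr (mem_stab_two_iff.mp hg).1

lemma derived_one_le_stab_one : derivedSeries Γ 1 ≤ Stab d 1 := by
  rw [derivedSeries_one, stab_one_eq_ker]
  exact Abelianization.commutator_subset_ker _

lemma gG_mem_stab_one (n : ℕ) : gG d n ∈ Stab d 1 := mem_stab_one_iff.mpr (rot_gG n)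

variable (d) in
noncomputable def sectHom : Stab d 1 →* (Fin d → Γ) where
  toFun g := sect g
  map_one' := sect_one
  map_mul' g h := by
    funext i
    simp [sect_mul, mem_stab_one_iff.mp h.2]

lemma sectHom_apply (g : Stab d 1) : sectHom d g = sect g := rfl

lemma sectHom_injective : Function.Injective (sectHom d) := fun g h hgh =>
  Subtype.ext (ext_rot_sect (by rw [mem_stab_one_iff.mp g.2, mem_stab_one_iff.mp h.2]) hgh)

lemma sect_commutatorElement {u v : Γ} (hu : u ∈ Stab d 1) (hv : v ∈ Stab d 1) (i : Fin d) :
    sect ⁅u, v⁆ i = ⁅sect u i, sect v i⁆ :=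
  congrFun (map_commutatorElement (sectHom d) ⟨u, hu⟩ ⟨v, hv⟩) i

variable (d) in
noncomputable def levelMap : Stab d 1 →* (Fin d → Multiplicative (Fin d)) :=
  ((rotHom d).compLeft (Fin d)).comp (sectHom d)

lemma levelMap_apply (g : Stab d 1) (i : Fin d) : levelMap d g i = .ofAdd (rot (sect g i)) :=
  rfl

lemma ker_levelMap : (levelMap d).ker = (Stab d 2).subgroupOf (Stab d 1) := by
  ext g
  simp [Subgroup.mem_subgroupOf, mem_stab_two_iff, mem_stab_one_iff.mp g.2, funext_iff,
    levelMap_apply]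

lemma levelMap_gG (n : ℕ) :
    levelMap d ⟨gG d n, gG_mem_stab_one n⟩ = Pi.mulSingle (-(n : Fin d)) (.ofAdd 1) := by
  funext i
  rw [levelMap_apply, sect_gG, rot_rSect, Pi.mulSingle_apply]
  by_cases h : i + n = 0 <;> simp [h, eq_neg_iff_add_eq_zero]

lemma derived_two_le_stab_two : derivedSeries Γ 2 ≤ Stab d 2 :=
  calc derivedSeries Γ 2 = ⁅derivedSeries Γ 1, derivedSeries Γ 1⁆ := derivedSeries_succ _ _
    _ ≤ ⁅Stab d 1, Stab d 1⁆ :=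
      Subgroup.commutator_mono derived_one_le_stab_one derived_one_le_stab_one
    _ = (commutator (Stab d 1)).map (Stab d 1).subtype :=
      (Subgroup.map_subtype_commutator _).symm
    _ ≤ (levelMap d).ker.map (Stab d 1).subtype :=
      Subgroup.map_mono (Abelianization.commutator_subset_ker _)
    _ ≤ Stab d 2 := by
      rw [ker_levelMap, Subgroup.subgroupOf_map_subtype]
      exact inf_le_left

/-! ### `Stab(2) = [Stab(1), Stab(1)]` -/

lemma closure_gG_le_stab_one : Subgroup.closure (Set.range (gG d)) ≤ Stab d 1 :=
  (Subgroup.closure_le _).mpr fun _ ⟨n, hn⟩ => hn ▸ gG_mem_stab_one n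

lemma conj_aG_pow_mem_closure_gG (m : ℕ) {h : Γ}
    (hh : h ∈ Subgroup.closure (Set.range (gG d))) :
    (aG d ^ m)⁻¹ * h * aG d ^ m ∈ Subgroup.closure (Set.range (gG d)) := by
  have hle : (Subgroup.closure (Set.range (gG d))).map (MulAut.conj (aG d ^ m)⁻¹).toMonoidHom ≤
      Subgroup.closure (Set.range (gG d)) := by
    rw [MonoidHom.map_closure, Subgroup.closure_le]
    rintro _ ⟨_, ⟨n, rfl⟩, rfl⟩
    rw [MulEquiv.coe_toMonoidHom, MulAut.conj_apply, inv_inv]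
    exact Subgroup.subset_closure ⟨n + m, by simp only [gG, pow_add]; group⟩
  exact hle ⟨h, hh, by rw [MulEquiv.coe_toMonoidHom, MulAut.conj_apply, inv_inv]⟩

lemma aG_inv_eq_pow : (aG d)⁻¹ = aG d ^ (d - 1) := by
  rw [eq_comm, ← mul_eq_one_iff_eq_inv, ← pow_succ, Nat.sub_add_cancel NeZero.one_le, aG_pow_d]

lemma closure_gG_normal : (Subgroup.closure (Set.range (gG d))).Normal := by
  rw [← Subgroup.normalizer_eq_top_iff, eq_top_iff, ← closure_aG_rG, Subgroup.closure_le]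
  rintro _ (rfl | rfl)
  · refine Subgroup.mem_normalizer_iff.mpr fun h => ⟨fun hh => ?_, fun hh => ?_⟩
    · simpa [← aG_inv_eq_pow] using conj_aG_pow_mem_closure_gG (d - 1) hh
    · simpa [mul_assoc] using conj_aG_pow_mem_closure_gG 1 hh
  · exact Subgroup.le_normalizer (Subgroup.subset_closure ⟨0, by simp [gG]⟩)

lemma stab_one_eq_closure_gG : Stab d 1 = Subgroup.closure (Set.range (gG d)) := by
  refine le_antisymm (fun g hg => ?_) closure_gG_le_stab_one
  have := closure_gG_normal (d := d)
  have hsup : Subgroup.zpowers (aG d) ⊔ Subgroup.closure (Set.range (gG d)) = ⊤ := by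
    rw [eq_top_iff, ← closure_aG_rG, Subgroup.closure_le]
    rintro _ (rfl | rfl)
    · exact Subgroup.mem_sup_left (Subgroup.mem_zpowers _)
    · exact Subgroup.mem_sup_right (Subgroup.subset_closure ⟨0, by simp [gG]⟩)
  obtain ⟨x, hx, h, hh, rfl⟩ := Subgroup.mem_sup_of_normal_right.mp (hsup ▸ Subgroup.mem_top g)
  obtain ⟨n, rfl⟩ := (isOfFinOrder_iff_pow_eq_one.mpr ⟨d, NeZero.pos d, aG_pow_d⟩
    ).mem_powers_iff_mem_zpowers.mpr hx
  have hn : (n : Fin d) = 0 := by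
    simpa [rot_mul, rot_aG_pow, mem_stab_one_iff.mp (closure_gG_le_stab_one hh)]
      using mem_stab_one_iff.mp hg
  obtain ⟨k, rfl⟩ := Fin.natCast_eq_zero.mp hn
  simpa [pow_mul, aG_pow_d] using hh

lemma closure_preimage_gG :
    Subgroup.closure (((↑) : Stab d 1 → Γ) ⁻¹' Set.range (gG d)) = ⊤ := by
  -- `Stab d 1` occurs in the type `↥(Stab d 1)`, so it cannot be rewritten directly.
  have key : ∀ K : Subgroup Γ, K = Subgroup.closure (Set.range (gG d)) →
      Subgroup.closure (((↑) : K → Γ) ⁻¹' Set.range (gG d)) = ⊤ := by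
    rintro K rfl
    exact Subgroup.closure_closure_coe_preimage
  exact key _ stab_one_eq_closure_gG

lemma gG_mod (n : ℕ) : gG d (n % d) = gG d n := by
  rw [gG, gG, ← pow_eq_pow_mod n aG_pow_d]

lemma rG_pow_d : rG d ^ d = 1 := by
  have hr : rG d ∈ Stab d 1 := mem_stab_one_iff.mpr rot_rG
  have hsect : sect (rG d ^ d) = rSect ^ d := by
    simpa [sectHom_apply, sect_rG] using map_pow (sectHom d) ⟨rG d, hr⟩ d
  have hrot : rot (rG d ^ d) = 0 := mem_stab_one_iff.mp (pow_mem hr d)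
  suffices ∀ w, ((rG d ^ d : Γ) : 𝕋) w = w from Subtype.ext (Equiv.ext this)
  intro w
  induction w with
  | nil => exact apply_nil _
  | cons i w ih =>
    rw [apply_cons, hrot, add_zero, hsect, Pi.pow_apply]
    unfold rSect
    split_ifs
    · rw [aG_pow_d]; rfl
    · rw [ih]
    · rw [one_pow]; rfl

lemma gG_pow_d (n : ℕ) : gG d n ^ d = 1 := by
  have h : gG d n = MulAut.conj (aG d ^ n)⁻¹ (rG d) := by
    rw [MulAut.conj_apply, inv_inv, gG]
  rw [h, ← map_pow, rG_pow_d, map_one]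

lemma ker_levelMap_le_commutator (hd : 1 < d) : (levelMap d).ker ≤ commutator (Stab d 1) := by
  let z (i : Fin d) : Abelianization (Stab d 1) := .of ⟨gG d (-i : Fin d).val, gG_mem_stab_one _⟩
  have hz (i : Fin d) : z i ^ d = 1 := by
    rw [← map_pow, ← Abelianization.of.map_one]
    exact congrArg _ (Subtype.ext (gG_pow_d _))
  have hof : Abelianization.of = (finPowHom z hz).comp (levelMap d) := by
    refine MonoidHom.eq_of_eqOn_dense closure_preimage_gG ?_
    rintro ⟨_, hx⟩ ⟨n, rfl⟩
    rw [MonoidHom.comp_apply, levelMap_gG, finPowHom_mulSingle hd]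
    simp only [z, neg_neg, Fin.val_natCast, gG_mod]
  intro x hx
  rw [← Abelianization.ker_of, MonoidHom.mem_ker, hof, MonoidHom.comp_apply, hx, map_one]

/-! ### `[Stab(1), Stab(1)] ≤ Γ''` -/

lemma gG_inv_mul_gG_mem_derived (m n : ℕ) : (gG d m)⁻¹ * gG d n ∈ derivedSeries Γ 1 := by
  rw [derivedSeries_one, ← Abelianization.ker_of, MonoidHom.mem_ker]
  simp [gG, mul_comm]

lemma sect_gG_inv_mul_gG (m n : ℕ) :
    sect ((gG d m)⁻¹ * gG d n) =
      fun i => (rSect (i + (m : Fin d)))⁻¹ * rSect (i + (n : Fin d)) := by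
  simp [sect_mul, sect_inv, rot_gG, sect_gG]

variable (d) in
noncomputable def seed : Γ := ⁅(gG d 3)⁻¹ * gG d 2, (gG d 0)⁻¹ * gG d 1⁆

lemma seed_mem_derived_two : seed d ∈ derivedSeries Γ 2 :=
  Subgroup.commutator_mem_commutator (gG_inv_mul_gG_mem_derived 3 2)
    (gG_inv_mul_gG_mem_derived 0 1)

/-- The sections of the two factors are supported on `{-2, -3, -4}` and `{0, -1, -2}`,
which meet only in `-2` when `d ≥ 5`. -/
lemma sect_seed (hd : 5 ≤ d) : sect (seed d) = Pi.mulSingle (-2) ⁅aG d, rG d⁆ := by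
  have hne (k : ℕ) (h0 : 0 < k) (hk : k < 5) : (k : Fin d) ≠ 0 :=
    Fin.natCast_ne_zero_of_lt h0 (by omega)
  have h1 : (1 : Fin d) ≠ 0 := by exact_mod_cast hne 1 (by norm_num) (by norm_num)
  have h2 : (2 : Fin d) ≠ 0 := by exact_mod_cast hne 2 (by norm_num) (by norm_num)
  have h3 : (3 : Fin d) ≠ 0 := by exact_mod_cast hne 3 (by norm_num) (by norm_num)
  have h4 : (4 : Fin d) ≠ 0 := by exact_mod_cast hne 4 (by norm_num) (by norm_num)
  have hs := fun m n => derived_one_le_stab_one (gG_inv_mul_gG_mem_derived (d := d) m n)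
  funext i
  rw [seed, sect_commutatorElement (hs 3 2) (hs 0 1), sect_gG_inv_mul_gG, sect_gG_inv_mul_gG,
    Pi.mulSingle_apply]
  push_cast
  by_cases hi : i = -2
  · subst hi
    norm_num [rSect, eq_neg_iff_add_eq_zero, h1, h2]
  rw [if_neg hi]
  by_cases h01 : i = 0 ∨ i = -1
  · rcases h01 with rfl | rfl <;> norm_num [rSect, eq_neg_iff_add_eq_zero, h1, h2, h3, h4]
  · rw [not_or, eq_neg_iff_add_eq_zero] at h01
    rw [eq_neg_iff_add_eq_zero] at hi
    norm_num [rSect, eq_neg_iff_add_eq_zero, h01, hi, add_assoc]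

noncomputable def sectImage (K : Subgroup Γ) : Subgroup (Fin d → Γ) :=
  (K.subgroupOf (Stab d 1)).map (sectHom d)

noncomputable def singleLift (K : Subgroup Γ) : Subgroup Γ :=
  ⨅ j, (sectImage K).comap (MonoidHom.mulSingle (fun _ : Fin d => Γ) j)

lemma mem_singleLift {K : Subgroup Γ} {x : Γ} :
    x ∈ singleLift K ↔ ∀ j, Pi.mulSingle j x ∈ sectImage K := by
  simp [singleLift]

lemma exists_sect_eq (hd : 1 < d) (j : Fin d) (g : Γ) : ∃ W : Stab d 1, sect W j = g := by
  have h1 : (-1 : Fin d) ≠ 0 :=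
    neg_ne_zero.mpr (by exact_mod_cast Fin.natCast_ne_zero_of_lt one_pos hd)
  have hrange : ((Pi.evalMonoidHom (fun _ => Γ) j).comp (sectHom d)).range = ⊤ := by
    rw [eq_top_iff, ← closure_aG_rG, Subgroup.closure_le]
    rintro _ (rfl | rfl)
    · exact ⟨⟨gG d (-j).val, gG_mem_stab_one _⟩, by simp [sectHom_apply, sect_gG, rSect]⟩
    · exact ⟨⟨gG d (-1 - j).val, gG_mem_stab_one _⟩,
        by simp [sectHom_apply, sect_gG, rSect, h1]⟩
  exact MonoidHom.range_eq_top.mp hrange g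

lemma singleLift_normal (hd : 1 < d) (K : Subgroup Γ) [hK : K.Normal] :
    (singleLift K).Normal := by
  refine ⟨fun x hx g => mem_singleLift.mpr fun j => ?_⟩
  obtain ⟨W, hW⟩ := exists_sect_eq hd j g
  obtain ⟨y, hy, hyx⟩ := mem_singleLift.mp hx j
  refine ⟨W * y * W⁻¹, hK.conj_mem _ hy W, ?_⟩
  funext k
  rw [map_mul, map_mul, map_inv, hyx]
  by_cases hk : k = j
  · subst hk
    simp [sectHom_apply, hW]
  · simp [hk]

lemma mulSingle_commutator_aG_rG_mem (hd : 5 ≤ d) (j : Fin d) :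
    Pi.mulSingle j ⁅aG d, rG d⁆ ∈ sectImage (derivedSeries Γ 2) := by
  set n := (-2 - j).val
  have hmem : (aG d ^ n)⁻¹ * seed d * aG d ^ n ∈ derivedSeries Γ 2 := by
    simpa using (derivedSeries_normal Γ 2).conj_mem _ seed_mem_derived_two (aG d ^ n)⁻¹
  refine ⟨⟨_, stab_two_le_stab_one (derived_two_le_stab_two hmem)⟩, hmem, ?_⟩
  have hshift (i : Fin d) : i + (-2 - j) = -2 ↔ i = j :=
    ⟨fun h => by linear_combination h, fun h => by linear_combination h⟩
  funext i
  simp only [sectHom_apply, sect_conj_aG_pow, sect_seed hd, Pi.mulSingle_apply, n,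
    Fin.cast_val_eq_self, hshift]

lemma derived_one_le_singleLift (hd : 5 ≤ d) :
    derivedSeries Γ 1 ≤ singleLift (derivedSeries Γ 2) := by
  have := singleLift_normal (by omega) (derivedSeries Γ 2)
  rw [derivedSeries_one]
  exact commutator_le_of_closure_pair_eq_top closure_aG_rG
    (mem_singleLift.mpr (mulSingle_commutator_aG_rG_mem hd))

lemma commutator_stab_one_le (hd : 5 ≤ d) :
    commutator (Stab d 1) ≤ (derivedSeries Γ 2).subgroupOf (Stab d 1) := by
  rw [commutator_def, Subgroup.commutator_le]
  rintro u - v -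
  obtain ⟨w, hw, hwuv⟩ : sectHom d ⁅u, v⁆ ∈ sectImage (derivedSeries Γ 2) := by
    rw [← Finset.noncommProd_mulSingle (sectHom d ⁅u, v⁆)]
    refine Subgroup.noncommProd_mem _ _ fun j _ =>
      mem_singleLift.mp (derived_one_le_singleLift hd ?_) j
    rw [map_commutatorElement, derivedSeries_one, commutator_def]
    exact Subgroup.commutator_mem_commutator (Subgroup.mem_top _) (Subgroup.mem_top _)
  exact sectHom_injective hwuv ▸ hw

theorem derived_two_eq_stab_two (hd : 5 ≤ d) : derivedSeries Γ 2 = Stab d 2 := by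
  refine le_antisymm derived_two_le_stab_two fun g hg => ?_
  have hker : (⟨g, stab_two_le_stab_one hg⟩ : Stab d 1) ∈ (levelMap d).ker := by
    rw [ker_levelMap]
    exact hg
  exact commutator_stab_one_le hd (ker_levelMap_le_commutator (by omega) hker)

/-! ### The index `[Γ' : Γ'']` -/

variable (d) in
noncomputable def totalRot : Γ →* Multiplicative (Fin d) where
  toFun g := .ofAdd (∑ i, rot (sect g i))
  map_one' := by simp [sect_one, rot_one]
  map_mul' g h := by
    rw [← ofAdd_add, add_comm]
    simp only [sect_mul, rot_mul, Finset.sum_add_distrib]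
    rw [Fintype.sum_equiv (Equiv.addRight (rot h)) (fun i => rot (sect g (i + rot h)))
      (fun i => rot (sect g i)) fun _ => rfl]

variable (d) in
noncomputable def derivedLevelMap : derivedSeries Γ 1 →* (Fin d → Multiplicative (Fin d)) :=
  (levelMap d).comp (Subgroup.inclusion derived_one_le_stab_one)

lemma piProdHom_derivedLevelMap (x : derivedSeries Γ 1) :
    piProdHom (derivedLevelMap d x) = totalRot d x := by
  rw [piProdHom_apply]
  exact (ofAdd_sum Finset.univ fun i => rot (sect (x : Γ) i)).symm

lemma derivedLevelMap_gG_inv_mul_gG (m n : ℕ) :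
    derivedLevelMap d ⟨_, gG_inv_mul_gG_mem_derived m n⟩ =
      Pi.mulSingle (-(n : Fin d)) (.ofAdd 1) / Pi.mulSingle (-(m : Fin d)) (.ofAdd 1) := by
  have h : Subgroup.inclusion derived_one_le_stab_one ⟨_, gG_inv_mul_gG_mem_derived m n⟩ =
      (⟨gG d m, gG_mem_stab_one m⟩ : Stab d 1)⁻¹ * ⟨gG d n, gG_mem_stab_one n⟩ := rfl
  rw [derivedLevelMap, MonoidHom.comp_apply, h, map_mul, map_inv, levelMap_gG, levelMap_gG,
    div_eq_inv_mul]

lemma range_derivedLevelMap : (derivedLevelMap d).range = piProdHom.ker := by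
  refine le_antisymm ?_ (ker_piProdHom_le 0 fun p x => ?_)
  · rintro _ ⟨x, rfl⟩
    rw [MonoidHom.mem_ker, piProdHom_derivedLevelMap]
    exact Abelianization.commutator_subset_ker _ (derivedSeries_one Γ ▸ x.2)
  · have hgen : ∀ q, Pi.mulSingle p (.ofAdd 1) / Pi.mulSingle q (.ofAdd 1) ∈
        (derivedLevelMap d).range :=
      fun q => ⟨_, by simpa using derivedLevelMap_gG_inv_mul_gG (d := d) (-q).val (-p).val⟩
    have hx : x = Multiplicative.ofAdd (1 : Fin d) ^ x.toAdd.val := by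
      rw [← ofAdd_nsmul, nsmul_one, Fin.cast_val_eq_self, ofAdd_toAdd]
    rw [hx, Pi.mulSingle_pow, Pi.mulSingle_pow, ← div_pow]
    exact pow_mem (hgen 0) _

theorem relIndex_derived_two (hd : 5 ≤ d) :
    (derivedSeries Γ 2).relIndex (derivedSeries Γ 1) = d ^ (d - 1) := by
  have hker : (derivedSeries Γ 2).subgroupOf (derivedSeries Γ 1) = (derivedLevelMap d).ker := by
    ext x
    rw [Subgroup.mem_subgroupOf, derived_two_eq_stab_two hd, derivedLevelMap, MonoidHom.mem_ker,
      MonoidHom.comp_apply, ← MonoidHom.mem_ker, ker_levelMap]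
    rfl
  have hcard := card_ker_piProdHom_mul (ι := Fin d) (M := Multiplicative (Fin d))
  simp only [Nat.card_eq_fintype_card, Fintype.card_multiplicative, Fintype.card_fin] at hcard
  rw [Subgroup.relIndex, hker, Subgroup.index_ker, range_derivedLevelMap,
    Nat.card_eq_fintype_card]
  have hpow : d ^ d = d ^ (d - 1) * d := by rw [← pow_succ, Nat.sub_add_cancel NeZero.one_le]
  rw [hpow] at hcard
  exact Nat.eq_of_mul_eq_mul_right (NeZero.pos d) hcard

end FG

/-- For every `d ≥ 5`, `Γ_d'' = Stab(2)`; consequently `[Γ_d' : Γ_d''] = d^(d-1)`. -/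
theorem stmt_8 (d : ℕ) [NeZero d] (hd : 5 ≤ d) :
    derivedSeries ↥(FG.Gamma d) 2 = FG.Stab d 2 ∧
    (derivedSeries ↥(FG.Gamma d) 2).relIndex (derivedSeries ↥(FG.Gamma d) 1) = d ^ (d - 1) := by
  exact ⟨FG.derived_two_eq_stab_two hd, FG.relIndex_derived_two hd⟩
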